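/- Let P be the uniform distribution on [a,b] with a < b. For each of the conditional sets β = {a,b}, β = {a}, and β = {b}, the sequence of n-th conditional unconstrained quantization errors V_n(P; β) tends to 0 as n → ∞, and the conditional quantization coefficient exists as a finite positive number and equals (a−b)²/12; that is, lim_{n→∞} n²·V_n(P; β) = (a−b)²/12 for each of the three choices of β. -/

import Mathlib

open MeasureTheory Set Filter

/-- The uniform distribution on `[a, b]`: normalized Lebesgue measure restricted to `[a, b]`. -/
noncomputable def uniformOn (a b : ℝ) : Measure ℝ :=
  (ENNReal.ofReal (b - a))⁻¹ • volume.restrict (Set.Icc a b)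

/-- The distortion error of a set `s` of points for the measure `P`. -/
noncomputable def distortion (P : Measure ℝ) (s : Set ℝ) : ℝ :=
  ∫ x, sInf ((fun a => (x - a) ^ 2) '' s) ∂P

/-- The `n`-th conditional (unconstrained) quantization error for `P` with respect to
the conditional set `β`. -/
noncomputable def condQuantError (P : Measure ℝ) (β : Set ℝ) (n : ℕ) : ℝ :=
  sInf { v : ℝ | ∃ α : Set ℝ, α.Finite ∧ α.ncard ≤ n - β.ncard ∧ v = distortion P (α ∪ β) }

/-!
Write `minSqDist s x` for the squared distance from `x` to a finite set `s` of `N` points.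
The points of `ℝ` within squared distance `t` of `s` form a set of length at most `2N√t`, so
`{x ∈ [a, b] | t < minSqDist s x}` has length at least `b - a - 2N√t`, and the layer-cake formula
gives `∫_[a,b] minSqDist s ≥ ∫_0^∞ (b - a - 2N√t)₊ dt = (b - a)³ / (12N²)`. The midpoints of `N`
equal cells attain this bound, and enlarging the set, e.g. by `β`, can only lower the integral.
With `k = card β` this squeezes `V_n` between `(b - a)² / (12n²)` and `(b - a)² / (12(n - k)²)`.
-/

open scoped Topology

noncomputable def minSqDist (s : Set ℝ) (x : ℝ) : ℝ := sInf ((fun p => (x - p) ^ 2) '' s)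

section minSqDist

variable {s : Set ℝ} {p : ℝ}

lemma bddBelow_image_sq_sub (s : Set ℝ) (x : ℝ) : BddBelow ((fun p => (x - p) ^ 2) '' s) :=
  ⟨0, by rintro _ ⟨p, -, rfl⟩; positivity⟩

lemma minSqDist_nonneg (s : Set ℝ) (x : ℝ) : 0 ≤ minSqDist s x :=
  Real.sInf_nonneg (by rintro _ ⟨p, -, rfl⟩; positivity)

lemma minSqDist_le (hp : p ∈ s) (x : ℝ) : minSqDist s x ≤ (x - p) ^ 2 :=
  csInf_le (bddBelow_image_sq_sub s x) ⟨p, hp, rfl⟩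

lemma exists_minSqDist_eq (hs : s.Finite) (hne : s.Nonempty) (x : ℝ) :
    ∃ p ∈ s, minSqDist s x = (x - p) ^ 2 := by
  obtain ⟨p, hp, h⟩ := (hne.image (fun p => (x - p) ^ 2)).csInf_mem (hs.image _)
  exact ⟨p, hp, h.symm⟩

lemma continuous_minSqDist (hs : s.Finite) (hne : s.Nonempty) : Continuous (minSqDist s) := by
  have hne' : hs.toFinset.Nonempty := hs.toFinset_nonempty.2 hne
  have : minSqDist s = fun x => hs.toFinset.inf' hne' (fun p => (x - p) ^ 2) := by
    funext x
    rw [Finset.inf'_eq_csInf_image, hs.coe_toFinset, minSqDist]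
  rw [this]
  exact Continuous.finset_inf'_apply hne' fun p _ => by fun_prop

lemma setOf_minSqDist_le_subset (hs : s.Finite) (hne : s.Nonempty) (t : ℝ) :
    {x | minSqDist s x ≤ t} ⊆ ⋃ p ∈ hs.toFinset, Metric.closedBall p √t := by
  intro x hx
  obtain ⟨p, hp, hpx⟩ := exists_minSqDist_eq hs hne x
  have hpt : (x - p) ^ 2 ≤ t := hpx ▸ hx
  exact mem_biUnion (hs.mem_toFinset.2 hp) (by simpa [Real.dist_eq] using Real.abs_le_sqrt hpt)

lemma volume_setOf_minSqDist_le (hs : s.Finite) (hne : s.Nonempty) (t : ℝ) :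
    volume {x | minSqDist s x ≤ t} ≤ ENNReal.ofReal (2 * s.ncard * √t) :=
  calc volume {x | minSqDist s x ≤ t}
      ≤ ∑ p ∈ hs.toFinset, volume (Metric.closedBall p √t) :=
        (measure_mono (setOf_minSqDist_le_subset hs hne t)).trans (measure_biUnion_finset_le _ _)
    _ = ENNReal.ofReal (2 * s.ncard * √t) := by
        rw [mul_comm 2 (s.ncard : ℝ), mul_assoc, ENNReal.ofReal_mul (Nat.cast_nonneg _),
          ENNReal.ofReal_natCast, ncard_eq_toFinset_card s hs, ← nsmul_eq_mul, ← Finset.sum_const]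
        simp only [Real.volume_closedBall]

lemma ofReal_sub_le_restrict_setOf_lt_minSqDist (hs : s.Finite) (hne : s.Nonempty) (a b t : ℝ) :
    ENNReal.ofReal (b - a - 2 * s.ncard * √t) ≤
      volume.restrict (Icc a b) {x | t < minSqDist s x} := by
  have hmeas : MeasurableSet {x | t < minSqDist s x} :=
    measurableSet_lt measurable_const (continuous_minSqDist hs hne).measurable
  have hcover : Icc a b ⊆ ({x | t < minSqDist s x} ∩ Icc a b) ∪ {x | minSqDist s x ≤ t} := by
    intro x hx
    by_cases h : t < minSqDist s x
    · exact Or.inl ⟨h, hx⟩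
    · exact Or.inr (not_lt.1 h)
  rw [ENNReal.ofReal_sub _ (by positivity), Measure.restrict_apply hmeas, tsub_le_iff_right,
    ← Real.volume_Icc]
  calc volume (Icc a b)
      ≤ volume ({x | t < minSqDist s x} ∩ Icc a b) + volume {x | minSqDist s x ≤ t} :=
        (measure_mono hcover).trans (measure_union_le _ _)
    _ ≤ _ := by gcongr; exact volume_setOf_minSqDist_le hs hne t

end minSqDist

lemma integral_sub_mul_sqrt {c k : ℝ} (hc : 0 ≤ c) (hk : 0 < k) :
    ∫ t in (0 : ℝ)..(c / k) ^ 2, (c - k * √t) = c ^ 3 / (3 * k ^ 2) := by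
  have hsqrt : ∫ t in (0 : ℝ)..(c / k) ^ 2, √t = 2 / 3 * (c / k) ^ 3 := by
    simp_rw [Real.sqrt_eq_rpow]
    rw [integral_rpow (Or.inl (by norm_num)), Real.zero_rpow (by norm_num), ← Real.rpow_natCast,
      ← Real.rpow_mul (by positivity)]
    norm_num
    ring
  rw [intervalIntegral.integral_sub intervalIntegrable_const
      (by apply Continuous.intervalIntegrable; fun_prop),
    intervalIntegral.integral_const, intervalIntegral.integral_const_mul, hsqrt, smul_eq_mul]
  field_simp
  ring

lemma le_setIntegral_Icc_minSqDist {s : Set ℝ} (hs : s.Finite) (hne : s.Nonempty) {a b : ℝ}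
    (hab : a ≤ b) : (b - a) ^ 3 / (12 * s.ncard ^ 2) ≤ ∫ x in Icc a b, minSqDist s x := by
  set N : ℝ := (s.ncard : ℝ)
  have hN : 0 < N := Nat.cast_pos.2 ((ncard_pos hs).2 hne)
  set T := ((b - a) / (2 * N)) ^ 2
  have hF := continuous_minSqDist hs hne
  have hFnn : 0 ≤ᵐ[volume.restrict (Icc a b)] minSqDist s := .of_forall (minSqDist_nonneg s)
  rw [← ENNReal.ofReal_le_ofReal_iff (integral_nonneg (minSqDist_nonneg s)),
    ofReal_integral_eq_lintegral_ofReal hF.integrableOn_Icc hFnn,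
    lintegral_eq_lintegral_meas_lt _ hFnn hF.aemeasurable]
  calc ENNReal.ofReal ((b - a) ^ 3 / (12 * N ^ 2))
      = ENNReal.ofReal (∫ t in (0 : ℝ)..T, (b - a - 2 * N * √t)) := by
        rw [integral_sub_mul_sqrt (sub_nonneg.2 hab) (by positivity)]
        ring_nf
    _ = ∫⁻ t in Ioc 0 T, ENNReal.ofReal (b - a - 2 * N * √t) := by
        rw [intervalIntegral.integral_of_le (by positivity)]
        refine ofReal_integral_eq_lintegral_ofReal ?_ ?_
        · exact (Continuous.integrableOn_Icc (by fun_prop)).mono_set Ioc_subset_Icc_self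
        · filter_upwards [ae_restrict_mem measurableSet_Ioc] with t ht
          have : √t ≤ (b - a) / (2 * N) :=
            (Real.sqrt_le_sqrt ht.2).trans_eq (Real.sqrt_sq (by positivity))
          rw [le_div_iff₀ (by positivity)] at this
          simp only [Pi.zero_apply]
          linarith
    _ ≤ ∫⁻ t in Ioi 0, ENNReal.ofReal (b - a - 2 * N * √t) :=
        lintegral_mono_set Ioc_subset_Ioi_self
    _ ≤ ∫⁻ t in Ioi 0, volume.restrict (Icc a b) {x | t < minSqDist s x} :=
        lintegral_mono fun t => ofReal_sub_le_restrict_setOf_lt_minSqDist hs hne a b t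

lemma integral_minSqDist_le_of_midpoint_mem {s : Set ℝ} (hs : s.Finite) {u v : ℝ} (huv : u ≤ v)
    (hmid : (u + v) / 2 ∈ s) : ∫ x in u..v, minSqDist s x ≤ (v - u) ^ 3 / 12 := by
  have hsq : ∫ x in u..v, (x - (u + v) / 2) ^ 2 = (v - u) ^ 3 / 12 := by
    rw [intervalIntegral.integral_comp_sub_right (fun x => x ^ 2), integral_pow]
    ring
  rw [← hsq]
  refine intervalIntegral.integral_mono_on huv ?_ (by apply Continuous.intervalIntegrable; fun_prop)
    fun x _ => minSqDist_le hmid x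
  exact (continuous_minSqDist hs ⟨_, hmid⟩).intervalIntegrable _ _

lemma integral_minSqDist_le_of_cell_midpoints_mem {s : Set ℝ} (hs : s.Finite) (a : ℝ) {h : ℝ}
    (hh : 0 ≤ h) {m : ℕ} (hm : m ≠ 0) (hmid : ∀ k < m, a + (k + 1 / 2) * h ∈ s) :
    ∫ x in a..a + m * h, minSqDist s x ≤ m * (h ^ 3 / 12) := by
  have hne : s.Nonempty := ⟨_, hmid 0 (Nat.pos_of_ne_zero hm)⟩
  calc ∫ x in a..a + m * h, minSqDist s x
      = ∑ k ∈ Finset.range m, ∫ x in a + k * h..a + (k + 1 : ℕ) * h, minSqDist s x := by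
        rw [intervalIntegral.sum_integral_adjacent_intervals
          (fun k _ => (continuous_minSqDist hs hne).intervalIntegrable _ _)]
        simp
    _ ≤ ∑ _k ∈ Finset.range m, h ^ 3 / 12 := by
        refine Finset.sum_le_sum fun k hk => ?_
        have hcell := integral_minSqDist_le_of_midpoint_mem hs
          (u := a + k * h) (v := a + (k + 1 : ℕ) * h) (by push_cast; linarith)
          (by convert hmid k (Finset.mem_range.1 hk) using 1; push_cast; ring)
        refine hcell.trans_eq ?_
        push_cast
        ring
    _ = m * (h ^ 3 / 12) := by rw [Finset.sum_const, Finset.card_range, nsmul_eq_mul]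

lemma distortion_eq_integral_minSqDist (P : Measure ℝ) (s : Set ℝ) :
    distortion P s = ∫ x, minSqDist s x ∂P := rfl

lemma distortion_nonneg (P : Measure ℝ) (s : Set ℝ) : 0 ≤ distortion P s :=
  integral_nonneg (minSqDist_nonneg s)

lemma condQuantError_le_distortion (P : Measure ℝ) (β : Set ℝ) {n : ℕ} {α : Set ℝ}
    (hα : α.Finite) (hcard : α.ncard ≤ n - β.ncard) :
    condQuantError P β n ≤ distortion P (α ∪ β) :=
  csInf_le ⟨0, by rintro _ ⟨α, -, -, rfl⟩; exact distortion_nonneg P _⟩ ⟨α, hα, hcard, rfl⟩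

lemma le_condQuantError {P : Measure ℝ} {β : Set ℝ} {n : ℕ} {v : ℝ}
    (h : ∀ α : Set ℝ, α.Finite → α.ncard ≤ n - β.ncard → v ≤ distortion P (α ∪ β)) :
    v ≤ condQuantError P β n :=
  le_csInf ⟨_, ∅, finite_empty, by simp, rfl⟩ (by rintro _ ⟨α, hα, hcard, rfl⟩; exact h α hα hcard)

lemma distortion_uniformOn {a b : ℝ} (hab : a ≤ b) (s : Set ℝ) :
    distortion (uniformOn a b) s = (b - a)⁻¹ * ∫ x in a..b, minSqDist s x := by
  rw [distortion_eq_integral_minSqDist, uniformOn, integral_smul_measure, ENNReal.toReal_inv,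
    ENNReal.toReal_ofReal (sub_nonneg.2 hab), intervalIntegral.integral_of_le hab,
    integral_Icc_eq_integral_Ioc, smul_eq_mul]

lemma le_condQuantError_uniformOn {a b : ℝ} (hab : a < b) {β : Set ℝ} (hβ : β.Finite)
    (hne : β.Nonempty) {n : ℕ} (hn : β.ncard ≤ n) :
    (b - a) ^ 2 / (12 * n ^ 2) ≤ condQuantError (uniformOn a b) β n := by
  refine le_condQuantError fun α hα hcard => ?_
  have hs : (α ∪ β).Finite := hα.union hβ
  have hsne : (α ∪ β).Nonempty := hne.mono subset_union_right
  have hsn : ((α ∪ β).ncard : ℝ) ≤ n := by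
    exact_mod_cast (ncard_union_le α β).trans (by omega)
  have hspos : (0 : ℝ) < (α ∪ β).ncard := Nat.cast_pos.2 ((ncard_pos hs).2 hsne)
  rw [distortion_uniformOn hab.le, intervalIntegral.integral_of_le hab.le,
    ← integral_Icc_eq_integral_Ioc]
  calc (b - a) ^ 2 / (12 * n ^ 2)
      ≤ (b - a) ^ 2 / (12 * (α ∪ β).ncard ^ 2) := by gcongr
    _ = (b - a)⁻¹ * ((b - a) ^ 3 / (12 * (α ∪ β).ncard ^ 2)) := by
        field_simp [(sub_pos.2 hab).ne']
    _ ≤ _ := by gcongr; exact le_setIntegral_Icc_minSqDist hs hsne hab.le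

lemma condQuantError_uniformOn_le {a b : ℝ} (hab : a < b) {β : Set ℝ} (hβ : β.Finite) {n : ℕ}
    (hn : β.ncard < n) :
    condQuantError (uniformOn a b) β n ≤ (b - a) ^ 2 / (12 * ((n - β.ncard : ℕ) : ℝ) ^ 2) := by
  set m := n - β.ncard
  have hm : m ≠ 0 := by omega
  have hm' : (m : ℝ) ≠ 0 := Nat.cast_ne_zero.2 hm
  let α : Finset ℝ := (Finset.range m).image fun k : ℕ => a + (k + 1 / 2) * ((b - a) / m)
  have hαcard : (α : Set ℝ).ncard ≤ m := by
    rw [ncard_coe_finset]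
    exact Finset.card_image_le.trans (Finset.card_range m).le
  have hcells := integral_minSqDist_le_of_cell_midpoints_mem (α.finite_toSet.union hβ) a
    (div_nonneg (sub_nonneg.2 hab.le) m.cast_nonneg) hm
    fun k hk => Or.inl (Finset.mem_image_of_mem _ (Finset.mem_range.2 hk))
  rw [mul_div_cancel₀ _ hm', add_sub_cancel] at hcells
  calc condQuantError (uniformOn a b) β n
      ≤ (b - a)⁻¹ * ∫ x in a..b, minSqDist (α ∪ β) x := by
        rw [← distortion_uniformOn hab.le]
        exact condQuantError_le_distortion _ β α.finite_toSet hαcard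
    _ ≤ (b - a)⁻¹ * (m * (((b - a) / m) ^ 3 / 12)) := by gcongr
    _ = (b - a) ^ 2 / (12 * m ^ 2) := by field_simp [(sub_pos.2 hab).ne']

theorem tendsto_sq_mul_condQuantError_uniformOn {a b : ℝ} (hab : a < b) {β : Set ℝ}
    (hβ : β.Finite) (hne : β.Nonempty) :
    Tendsto (fun n : ℕ => (n : ℝ) ^ 2 * condQuantError (uniformOn a b) β n) atTop
      (𝓝 ((b - a) ^ 2 / 12)) := by
  set k := β.ncard
  have hk : 0 < k := (ncard_pos hβ).2 hne
  have hupper : Tendsto (fun n : ℕ => (b - a) ^ 2 / 12 * ((n : ℝ) / (n + -k)) ^ 2) atTop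
      (𝓝 ((b - a) ^ 2 / 12)) := by
    simpa using ((tendsto_natCast_div_add_atTop (-k : ℝ)).pow 2).const_mul ((b - a) ^ 2 / 12)
  refine tendsto_of_tendsto_of_tendsto_of_le_of_le' tendsto_const_nhds hupper ?_ ?_
  · filter_upwards [eventually_ge_atTop k] with n hn
    have hn0 : (n : ℝ) ≠ 0 := Nat.cast_ne_zero.2 (by omega)
    calc (b - a) ^ 2 / 12 = (n : ℝ) ^ 2 * ((b - a) ^ 2 / (12 * n ^ 2)) := by field_simp
      _ ≤ _ := by gcongr; exact le_condQuantError_uniformOn hab hβ hne hn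
  · filter_upwards [eventually_gt_atTop k] with n hn
    have hnk : ((n - k : ℕ) : ℝ) = n + -k := by push_cast [hn.le]; ring
    have hnk0 : (n : ℝ) + -k ≠ 0 := by rw [← hnk]; exact Nat.cast_ne_zero.2 (by omega)
    calc (n : ℝ) ^ 2 * condQuantError (uniformOn a b) β n
        ≤ (n : ℝ) ^ 2 * ((b - a) ^ 2 / (12 * ((n - k : ℕ) : ℝ) ^ 2)) := by
          gcongr; exact condQuantError_uniformOn_le hab hβ hn
      _ = _ := by rw [hnk]; field_simp

theorem tendsto_condQuantError_uniformOn {a b : ℝ} (hab : a < b) {β : Set ℝ}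
    (hβ : β.Finite) (hne : β.Nonempty) :
    Tendsto (fun n : ℕ => condQuantError (uniformOn a b) β n) atTop (𝓝 0) := by
  have hinv : Tendsto (fun n : ℕ => ((n : ℝ) ^ 2)⁻¹) atTop (𝓝 0) :=
    tendsto_inv_atTop_zero.comp ((tendsto_pow_atTop two_ne_zero).comp tendsto_natCast_atTop_atTop)
  refine (mul_zero ((b - a) ^ 2 / 12) ▸
    (tendsto_sq_mul_condQuantError_uniformOn hab hβ hne).mul hinv).congr' ?_
  filter_upwards [eventually_ne_atTop 0] with n hn
  field_simp

/-- For the uniform distribution on `[a,b]` and each conditional set `{a,b}`, `{a}`, `{b}`,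
the conditional quantization errors tend to 0 and the conditional quantization coefficient
exists and equals `(a-b)²/12`. -/
theorem stmt5 (a b : ℝ) (hab : a < b) :
    (Tendsto (fun n : ℕ => condQuantError (uniformOn a b) {a, b} n) atTop (nhds 0)
      ∧ Tendsto (fun n : ℕ => (n : ℝ) ^ 2 * condQuantError (uniformOn a b) {a, b} n) atTop
          (nhds ((a - b) ^ 2 / 12)))
    ∧ (Tendsto (fun n : ℕ => condQuantError (uniformOn a b) {a} n) atTop (nhds 0)
      ∧ Tendsto (fun n : ℕ => (n : ℝ) ^ 2 * condQuantError (uniformOn a b) {a} n) atTop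
          (nhds ((a - b) ^ 2 / 12)))
    ∧ (Tendsto (fun n : ℕ => condQuantError (uniformOn a b) {b} n) atTop (nhds 0)
      ∧ Tendsto (fun n : ℕ => (n : ℝ) ^ 2 * condQuantError (uniformOn a b) {b} n) atTop
          (nhds ((a - b) ^ 2 / 12))) := by
  have h : ∀ β : Set ℝ, β.Finite → β.Nonempty →
      Tendsto (fun n : ℕ => condQuantError (uniformOn a b) β n) atTop (𝓝 0) ∧
      Tendsto (fun n : ℕ => (n : ℝ) ^ 2 * condQuantError (uniformOn a b) β n) atTop
        (𝓝 ((a - b) ^ 2 / 12)) := fun β hβ hne =>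
    ⟨tendsto_condQuantError_uniformOn hab hβ hne,
      sub_sq_comm a b ▸ tendsto_sq_mul_condQuantError_uniformOn hab hβ hne⟩
  exact ⟨h _ (toFinite _) (insert_nonempty a {b}), h _ (toFinite _) (singleton_nonempty a),
    h _ (toFinite _) (singleton_nonempty b)⟩
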